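/- arXiv:math/0701063 — 2 statements merged into one kernel-verified Lean document; each statement's English description precedes it below -/
import Mathlib

section
/- Let ε : U × U × ℝ₊ × ℝ → ℝᵖ be a C² function with ε(u, u, t, x) = 0 for all u ∈ U, t ≥ 0, x ∈ ℝ, where U is a convex open neighborhood of the origin. Then there exists a constant C such that for all (u_L, u_R), (u_L', u_R') ∈ U × U and (t₀,x₀), (t₀',x₀') in a compact set, |ε(u_L',u_R',t₀',x₀') - ε(u_L,u_R,t₀,x₀)| ≤ C·|u_R - u_L|·(|u_L'-u_L| + |u_R'-u_R| + |t₀'-t₀| + |x₀'-x₀|) + C·|(u_R'-u_L') - (u_R-u_L)|. -/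
/-!
Write `q = (u_L, u_R, t₀, x₀)` and move first along the diagonal direction
`w = (u_L' - u_L, u_L' - u_L, t₀' - t₀, x₀' - x₀)`, then in the `u_R` slot only. Since `ε`
vanishes on the half-space `{(u, u, t, x) | t ≥ 0}`, its derivative there kills diagonal
directions; every point `z` of the first segment lies at distance `|u_R - u_L|` from such a
diagonal point, so by the Lipschitz bound on `Dε` we get `|Dε(z) w| ≤ C |u_R - u_L| |w|`.
The second move costs at most `sup |Dε|` times `|(u_R' - u_L') - (u_R - u_L)|`.
-/

open Set

open scoped NNReal

variable {E F : Type*} [NormedAddCommGroup E] [NormedSpace ℝ E]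
  [NormedAddCommGroup F] [NormedSpace ℝ F]

theorem Convex.norm_image_sub_le_of_fderiv_apply_eq_zero_nearby {f : E → F} {s : Set E}
    {L : ℝ≥0} {δ : ℝ} {x y : E} (hs : Convex ℝ s) (hf : ∀ z ∈ s, DifferentiableAt ℝ f z)
    (hLip : LipschitzOnWith L (fderiv ℝ f) s) (xs : x ∈ s) (ys : y ∈ s)
    (hnear : ∀ z ∈ segment ℝ x y, ∃ z' ∈ s, fderiv ℝ f z' (y - x) = 0 ∧ ‖z - z'‖ ≤ δ) :
    ‖f y - f x‖ ≤ L * δ * ‖y - x‖ := by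
  set g := (AffineMap.lineMap x y : ℝ → E)
  have segm : MapsTo g (Icc 0 1) s := hs.mapsTo_lineMap xs ys
  have hD : ∀ t ∈ Icc (0 : ℝ) 1,
      HasDerivWithinAt (f ∘ g) (fderiv ℝ f (g t) (y - x)) (Icc 0 1) t := fun t ht =>
    (hf _ (segm ht)).hasFDerivAt.comp_hasDerivWithinAt t AffineMap.hasDerivWithinAt_lineMap
  have bound : ∀ t ∈ Ico (0 : ℝ) 1, ‖fderiv ℝ f (g t) (y - x)‖ ≤ L * δ * ‖y - x‖ := by
    intro t ht
    have ht' : t ∈ Icc (0 : ℝ) 1 := Ico_subset_Icc_self ht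
    obtain ⟨z', hz's, hz'0, hz'δ⟩ :=
      hnear (g t) (segment_eq_image_lineMap ℝ x y ▸ mem_image_of_mem _ ht')
    calc ‖fderiv ℝ f (g t) (y - x)‖ = ‖(fderiv ℝ f (g t) - fderiv ℝ f z') (y - x)‖ := by
          rw [sub_apply, hz'0, sub_zero]
      _ ≤ ‖fderiv ℝ f (g t) - fderiv ℝ f z'‖ * ‖y - x‖ := ContinuousLinearMap.le_opNorm _ _
      _ ≤ L * ‖g t - z'‖ * ‖y - x‖ := by
          gcongr
          simpa only [dist_eq_norm] using hLip.dist_le_mul _ (segm ht') _ hz's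
      _ ≤ L * δ * ‖y - x‖ := by gcongr
  simpa [g] using norm_image_sub_le_of_norm_deriv_le_segment_01' hD bound

theorem fderiv_apply_diag_eq_zero {f : E × E × ℝ × ℝ → F}
    (hdiag : ∀ u : E, ∀ t x : ℝ, 0 ≤ t → f (u, u, t, x) = 0)
    {u : E} {t x : ℝ} (ht : 0 ≤ t) (hf : DifferentiableAt ℝ f (u, u, t, x)) (h : E) (s y : ℝ) :
    fderiv ℝ f (u, u, t, x) (h, h, s, y) = 0 := by
  set D : E × ℝ × ℝ →L[ℝ] E × E × ℝ × ℝ :=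
    (ContinuousLinearMap.fst ℝ E (ℝ × ℝ)).prod
      ((ContinuousLinearMap.fst ℝ E (ℝ × ℝ)).prod (ContinuousLinearMap.snd ℝ E (ℝ × ℝ)))
  set time : E × ℝ × ℝ →L[ℝ] ℝ :=
    (ContinuousLinearMap.fst ℝ ℝ ℝ).comp (ContinuousLinearMap.snd ℝ E (ℝ × ℝ))
  -- `f ∘ D` vanishes on a convex set with nonempty interior, so its derivative there is zero.
  have hT : UniqueDiffOn ℝ (time ⁻¹' Ici 0) := by
    refine uniqueDiffOn_convex ((convex_Ici 0).linear_preimage time.toLinearMap)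
      ⟨(0, 1, 0), mem_interior_iff_mem_nhds.2 ?_⟩
    exact Filter.mem_of_superset ((isOpen_Ioi.preimage time.continuous).mem_nhds
      (by simp [time])) fun z hz => le_of_lt hz
  have hcomp : HasFDerivAt (f ∘ D) ((fderiv ℝ f (u, u, t, x)).comp D) (u, t, x) :=
    HasFDerivAt.comp (f := ⇑D) (u, t, x) hf.hasFDerivAt D.hasFDerivAt
  have hzero : HasFDerivWithinAt (f ∘ D) (0 : E × ℝ × ℝ →L[ℝ] F) (time ⁻¹' Ici 0) (u, t, x) :=
    (hasFDerivWithinAt_const 0 _ _).congr (fun z hz => hdiag _ _ _ hz) (hdiag _ _ _ ht)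
  simpa [D] using congrArg (fun Λ => Λ (h, s, y)) ((hT _ ht).eq hcomp.hasFDerivWithinAt hzero)

theorem ContDiff.exists_bound_and_lipschitzOnWith_fderiv {f : E → F} (hf : ContDiff ℝ 2 f)
    {s : Set E} (hs : IsCompact s) :
    ∃ C : ℝ≥0, (∀ z ∈ s, ‖fderiv ℝ f z‖ ≤ C) ∧ LipschitzOnWith C (fderiv ℝ f) s := by
  obtain ⟨C₁, hC₁⟩ :=
    hs.exists_bound_of_continuousOn (hf.continuous_fderiv two_ne_zero).continuousOn
  obtain ⟨C₂, hC₂⟩ := (hf.fderiv_right (m := 1) le_rfl).locallyLipschitz.locallyLipschitzOn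
    |>.exists_lipschitzOnWith_of_compact hs
  refine ⟨max C₁.toNNReal C₂, fun z hz => ?_, hC₂.weaken (le_max_right _ _)⟩
  exact (hC₁ z hz).trans ((Real.le_coe_toNNReal C₁).trans (le_max_left _ _))

theorem Convex.norm_image_sub_le_of_vanishing_on_diag {ε : E × E × ℝ × ℝ → F}
    {s : Set (E × E × ℝ × ℝ)} {C : ℝ≥0} (hs : Convex ℝ s)
    (hdiff : ∀ z ∈ s, DifferentiableAt ℝ ε z)
    (hdiag : ∀ u : E, ∀ t x : ℝ, 0 ≤ t → ε (u, u, t, x) = 0)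
    (hbound : ∀ z ∈ s, ‖fderiv ℝ ε z‖ ≤ C) (hLip : LipschitzOnWith C (fderiv ℝ ε) s)
    {uL uR uL' uR' : E} {t₀ x₀ t₀' x₀' : ℝ} (ht₀ : 0 ≤ t₀) (ht₀' : 0 ≤ t₀')
    (hq : (uL, uR, t₀, x₀) ∈ s) (hq₁ : (uL', uR + (uL' - uL), t₀', x₀') ∈ s)
    (hq' : (uL', uR', t₀', x₀') ∈ s)
    (hd : (uL, uL, t₀, x₀) ∈ s) (hd₁ : (uL', uL', t₀', x₀') ∈ s) :
    ‖ε (uL', uR', t₀', x₀') - ε (uL, uR, t₀, x₀)‖ ≤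
      C * ‖uR - uL‖ * ‖(uL' - uL, uL' - uL, t₀' - t₀, x₀' - x₀)‖
        + C * ‖(uR' - uL') - (uR - uL)‖ := by
  set q : E × E × ℝ × ℝ := (uL, uR, t₀, x₀)
  set d : E × E × ℝ × ℝ := (uL, uL, t₀, x₀)
  set w : E × E × ℝ × ℝ := (uL' - uL, uL' - uL, t₀' - t₀, x₀' - x₀)
  have hqw : q + w = (uL', uR + (uL' - uL), t₀', x₀') := by
    simp only [q, w, Prod.mk_add_mk, add_sub_cancel]
  have hdw : d + w = (uL', uL', t₀', x₀') := by
    simp only [d, w, Prod.mk_add_mk, add_sub_cancel]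
  have hslide : ‖ε (q + w) - ε q‖ ≤ C * ‖uR - uL‖ * ‖w‖ := by
    have := hs.norm_image_sub_le_of_fderiv_apply_eq_zero_nearby (δ := ‖uR - uL‖) hdiff hLip hq
      (hqw ▸ hq₁) ?_
    · rwa [add_sub_cancel_left] at this
    rw [segment_eq_image', add_sub_cancel_left]
    rintro _ ⟨θ, hθ, rfl⟩
    have hz' := hs.add_smul_mem hd (hdw ▸ hd₁) hθ
    refine ⟨d + θ • w, hz', ?_, ?_⟩
    · have hτ : 0 ≤ t₀ + θ * (t₀' - t₀) := by nlinarith [hθ.1, hθ.2]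
      exact fderiv_apply_diag_eq_zero hdiag hτ (hdiff _ hz') _ _ _
    · rw [add_sub_add_right_eq_sub]
      simp [q, d]
  have hjump : ‖ε (uL', uR', t₀', x₀') - ε (q + w)‖ ≤ C * ‖(uR' - uL') - (uR - uL)‖ := by
    refine (hs.norm_image_sub_le_of_norm_fderiv_le hdiff hbound (hqw ▸ hq₁) hq').trans_eq ?_
    have hgap : uR' - (uR + (uL' - uL)) = (uR' - uL') - (uR - uL) := by abel
    simp [hqw, hgap]
  calc _ ≤ ‖ε (uL', uR', t₀', x₀') - ε (q + w)‖ + ‖ε (q + w) - ε q‖ :=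
        norm_sub_le_norm_sub_add_norm_sub _ _ _
    _ ≤ _ := by linarith

theorem stmt2_general {p : ℕ} (U : Set (Fin p → ℝ))
    (hUb : Bornology.IsBounded U)
    (ε : (Fin p → ℝ) × (Fin p → ℝ) × ℝ × ℝ → (Fin p → ℝ))
    (hε : ContDiff ℝ 2 ε)
    (hdiag : ∀ u : Fin p → ℝ, ∀ t x : ℝ, 0 ≤ t → ε (u, u, t, x) = 0) :
    ∀ K : Set (ℝ × ℝ), IsCompact K →
      ∃ C : ℝ, 0 ≤ C ∧
        ∀ uL uR uL' uR' : Fin p → ℝ, uL ∈ U → uR ∈ U → uL' ∈ U → uR' ∈ U →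
        ∀ t₀ x₀ t₀' x₀' : ℝ, (t₀, x₀) ∈ K → (t₀', x₀') ∈ K → 0 ≤ t₀ → 0 ≤ t₀' →
          ‖ε (uL', uR', t₀', x₀') - ε (uL, uR, t₀, x₀)‖ ≤
            C * ‖uR - uL‖ *
              (‖uL' - uL‖ + ‖uR' - uR‖ + |t₀' - t₀| + |x₀' - x₀|)
            + C * ‖(uR' - uL') - (uR - uL)‖ := by
  intro K hK
  obtain ⟨a, ha⟩ := hUb.exists_norm_le
  obtain ⟨b, hb⟩ := hK.isBounded.exists_norm_le
  set r := max a b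
  set S := Metric.closedBall (0 : (Fin p → ℝ) × (Fin p → ℝ) × ℝ × ℝ) (3 * r)
  obtain ⟨C, hbound, hLip⟩ :=
    hε.exists_bound_and_lipschitzOnWith_fderiv (isCompact_closedBall 0 (3 * r))
  refine ⟨C, C.2, ?_⟩
  intro uL uR uL' uR' huL huR huL' huR' t₀ x₀ t₀' x₀' hK₀ hK₀' ht₀ ht₀'
  have hU : ∀ {v}, v ∈ U → ‖v‖ ≤ r := fun hv => (ha _ hv).trans (le_max_left _ _)
  have hr : 0 ≤ r := (norm_nonneg uL).trans (hU huL)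
  have hU₃ : ∀ {v}, v ∈ U → ‖v‖ ≤ 3 * r := fun hv => by linarith [hU hv]
  have hS : ∀ {v v' : Fin p → ℝ} {t x : ℝ}, ‖v‖ ≤ 3 * r → ‖v'‖ ≤ 3 * r → (t, x) ∈ K →
      (v, v', t, x) ∈ S := by
    intro v v' t x hv hv' htx
    obtain ⟨ht, hx⟩ := norm_prod_le_iff.1 ((hb _ htx).trans (le_max_right a b))
    simp only [S, Metric.mem_closedBall, dist_zero_right, norm_prod_le_iff]
    exact ⟨hv, hv', by linarith, by linarith⟩
  have hshift : ‖uR + (uL' - uL)‖ ≤ 3 * r := by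
    linarith [norm_add_le uR (uL' - uL), norm_sub_le uL' uL, hU huR, hU huL', hU huL]
  have hw : ‖(uL' - uL, uL' - uL, t₀' - t₀, x₀' - x₀)‖ ≤
      ‖uL' - uL‖ + ‖uR' - uR‖ + |t₀' - t₀| + |x₀' - x₀| := by
    have := norm_nonneg (uL' - uL); have := norm_nonneg (uR' - uR)
    have := abs_nonneg (t₀' - t₀); have := abs_nonneg (x₀' - x₀)
    simp only [norm_prod_le_iff, Real.norm_eq_abs]
    refine ⟨?_, ?_, ?_, ?_⟩ <;> linarith
  refine ((convex_closedBall _ _).norm_image_sub_le_of_vanishing_on_diag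
    (fun z _ => hε.differentiable two_ne_zero z) hdiag hbound hLip ht₀ ht₀'
    (hS (hU₃ huL) (hU₃ huR) hK₀) (hS (hU₃ huL') hshift hK₀') (hS (hU₃ huL') (hU₃ huR') hK₀')
    (hS (hU₃ huL) (hU₃ huL) hK₀) (hS (hU₃ huL') (hU₃ huL') hK₀')).trans ?_
  gcongr

/-- Key Lipschitz estimate (3.6) on the wave-strength map `ε`, a `C²` function
vanishing on the diagonal `u_L = u_R`. -/
theorem stmt2 {p : ℕ} (U : Set (Fin p → ℝ))
    (hU : Convex ℝ U) (hUo : IsOpen U) (hU0 : (0 : Fin p → ℝ) ∈ U)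
    (hUb : Bornology.IsBounded U)
    (ε : (Fin p → ℝ) × (Fin p → ℝ) × ℝ × ℝ → (Fin p → ℝ))
    (hε : ContDiff ℝ 2 ε)
    (hdiag : ∀ u : Fin p → ℝ, ∀ t x : ℝ, 0 ≤ t → ε (u, u, t, x) = 0) :
    ∀ K : Set (ℝ × ℝ), IsCompact K →
      ∃ C : ℝ, 0 ≤ C ∧
        ∀ uL uR uL' uR' : Fin p → ℝ, uL ∈ U → uR ∈ U → uL' ∈ U → uR' ∈ U →
        ∀ t₀ x₀ t₀' x₀' : ℝ, (t₀, x₀) ∈ K → (t₀', x₀') ∈ K → 0 ≤ t₀ → 0 ≤ t₀' →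
          ‖ε (uL', uR', t₀', x₀') - ε (uL, uR, t₀, x₀)‖ ≤
            C * ‖uR - uL‖ *
              (‖uL' - uL‖ + ‖uR' - uR‖ + |t₀' - t₀| + |x₀' - x₀|)
            + C * ‖(uR' - uL') - (uR - uL)‖ :=
  stmt2_general U hUb ε hε hdiag
end

section
/- Let θ : ℝ² → ℝ be C¹ with compact support, and let v : ℝ² → ℝᵖ be C¹ on the triangle T = {(t,x) : 0 ≤ t ≤ s, σ⁻t ≤ x ≤ σ⁺t} (with σ⁻ < σ⁺), and suppose |∂ₜv + ∂ₓ(F(t,x)) - G(t,x)| ≤ E on T where F = f(t,x,v(t,x)) and G = g(t,x,v(t,x)) for C¹ maps f, g. Then |∫∫_T (v·∂ₜθ + F·∂ₓθ + G·θ) dx dt - B(θ)| ≤ E·‖θ‖_{C⁰}·|T|, where B(θ) := ∫_{σ⁻s}^{σ⁺s} v(s,x)θ(s,x)dx + ∫₀ˢ (F(t,σ⁺t) - σ⁺v(t,σ⁺t))θ(t,σ⁺t)dt - ∫₀ˢ (F(t,σ⁻t) - σ⁻v(t,σ⁻t))θ(t,σ⁻t)dt and |T| = (σ⁺-σ⁻)s²/2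 is the area of T. -/
open intervalIntegral

/-!
Pass to the fan coordinates `(t, ξ)`, `x = t ξ`, which map the rectangle `[0, s] × [σ⁻, σ⁺]`
onto `T`. There the divergence `∂ₜu + ∂ₓw` of the fluxes `u = θ v`, `w = θ F` becomes
`t⁻¹ (∂ₜ(t u) + ∂_ξ(w - ξ u))`, so the divergence theorem on the rectangle produces exactly the
boundary terms `B(θ)`; the side `t = 0` contributes nothing because of the factor `t`. The
weak-form integrand differs from `∂ₜu + ∂ₓw` by `θ` times the residual, of size at most `Θ E`,
and the Jacobian `t` integrates to the area `|T|`.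
-/

open Set MeasureTheory Filter Topology Function

section

variable {E : Type*} [NormedAddCommGroup E] [NormedSpace ℝ E]

theorem HasFDerivAt.hasDerivAt_partial_fst {f : ℝ × ℝ → E} {f' : ℝ × ℝ →L[ℝ] E} {t y : ℝ}
    (hf : HasFDerivAt f f' (t, y)) : HasDerivAt (fun t' => f (t', y)) (f' (1, 0)) t :=
  hf.comp_hasDerivAt t ((hasDerivAt_id t).prodMk (hasDerivAt_const t y))

theorem HasFDerivAt.hasDerivAt_partial_snd {f : ℝ × ℝ → E} {f' : ℝ × ℝ →L[ℝ] E} {t y : ℝ}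
    (hf : HasFDerivAt f f' (t, y)) : HasDerivAt (fun y' => f (t, y')) (f' (0, 1)) y :=
  hf.comp_hasDerivAt y ((hasDerivAt_const y t).prodMk (hasDerivAt_id y))

theorem fderiv_smul_divergence_sub {θ : ℝ × ℝ → ℝ} {V W : ℝ × ℝ → E} {z : ℝ × ℝ} (G : E)
    (hθ : DifferentiableAt ℝ θ z) (hV : DifferentiableAt ℝ V z) (hW : DifferentiableAt ℝ W z) :
    fderiv ℝ (θ • V) z (1, 0) + fderiv ℝ (θ • W) z (0, 1) -
        (fderiv ℝ θ z (1, 0) • V z + fderiv ℝ θ z (0, 1) • W z + θ z • G) =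
      θ z • (fderiv ℝ V z (1, 0) + fderiv ℝ W z (0, 1) - G) := by
  rw [fderiv_smul hθ hV, fderiv_smul hθ hW]
  simp only [add_apply, smul_apply, ContinuousLinearMap.smulRight_apply, smul_add, smul_sub]
  abel

theorem ContDiff.comp_contDiffOn_graph {E' : Type*} [NormedAddCommGroup E'] [NormedSpace ℝ E']
    {n : WithTop ℕ∞} {f : ℝ → ℝ → E' → E} {V : ℝ × ℝ → E'} {S : Set (ℝ × ℝ)}
    (hf : ContDiff ℝ n fun z : ℝ × ℝ × E' => f z.1 z.2.1 z.2.2) (hV : ContDiffOn ℝ n V S) :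
    ContDiffOn ℝ n (fun z : ℝ × ℝ => f z.1 z.2 (V z)) S :=
  hf.comp_contDiffOn (contDiffOn_fst.prodMk (contDiffOn_snd.prodMk hV))

def fanMap (q : ℝ × ℝ) : ℝ × ℝ := (q.1, q.1 * q.2)

def fanFluxTime (u : ℝ × ℝ → E) (q : ℝ × ℝ) : E := q.1 • u (fanMap q)

def fanFluxSpace (u w : ℝ × ℝ → E) (q : ℝ × ℝ) : E := w (fanMap q) - q.2 • u (fanMap q)

theorem contDiff_fanMap {n : WithTop ℕ∞} : ContDiff ℝ n fanMap :=
  contDiff_fst.prodMk (contDiff_fst.mul contDiff_snd)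

theorem ContinuousOn.fanFluxTime {u : ℝ × ℝ → E} {R S : Set (ℝ × ℝ)} (hu : ContinuousOn u S)
    (hR : MapsTo fanMap R S) : ContinuousOn (fanFluxTime u) R :=
  continuousOn_fst.smul (hu.comp (contDiff_fanMap (n := 0)).continuous.continuousOn hR)

theorem ContDiffOn.fanFluxTime {n : WithTop ℕ∞} {u : ℝ × ℝ → E} {R S : Set (ℝ × ℝ)}
    (hu : ContDiffOn ℝ n u S) (hR : MapsTo fanMap R S) : ContDiffOn ℝ n (fanFluxTime u) R :=
  contDiffOn_fst.smul (hu.comp contDiff_fanMap.contDiffOn hR)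

theorem ContDiffOn.fanFluxSpace {n : WithTop ℕ∞} {u w : ℝ × ℝ → E} {R S : Set (ℝ × ℝ)}
    (hu : ContDiffOn ℝ n u S) (hw : ContDiffOn ℝ n w S) (hR : MapsTo fanMap R S) :
    ContDiffOn ℝ n (fanFluxSpace u w) R :=
  (hw.comp contDiff_fanMap.contDiffOn hR).sub
    (contDiffOn_snd.smul (hu.comp contDiff_fanMap.contDiffOn hR))

theorem fderiv_fanFluxTime_add_fanFluxSpace {u w : ℝ × ℝ → E} {q : ℝ × ℝ}
    (hu : DifferentiableAt ℝ u (fanMap q)) (hw : DifferentiableAt ℝ w (fanMap q)) :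
    fderiv ℝ (fanFluxTime u) q (1, 0) + fderiv ℝ (fanFluxSpace u w) q (0, 1) =
      q.1 • (fderiv ℝ u (fanMap q) (1, 0) + fderiv ℝ w (fanMap q) (0, 1)) := by
  obtain ⟨t, y⟩ := q
  have hΦ : DifferentiableAt ℝ fanMap (t, y) := contDiff_fanMap.differentiable one_ne_zero _
  have hA : DifferentiableAt ℝ (fanFluxTime u) (t, y) :=
    differentiableAt_fst.smul (hu.comp _ hΦ)
  have hB : DifferentiableAt ℝ (fanFluxSpace u w) (t, y) :=
    (hw.comp _ hΦ).sub (differentiableAt_snd.smul (hu.comp _ hΦ))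
  have hΦt : HasDerivAt (fun t' => fanMap (t', y)) (1, y) t := by
    simpa [fanMap] using (hasDerivAt_id t).prodMk ((hasDerivAt_id t).mul_const y)
  have hΦy : HasDerivAt (fun y' => fanMap (t, y')) (0, t) y := by
    simpa [fanMap] using (hasDerivAt_const y t).prodMk ((hasDerivAt_id y).const_mul t)
  have hAt := (hasDerivAt_id t).smul (hu.hasFDerivAt.comp_hasDerivAt t hΦt)
  have hBy := (hw.hasFDerivAt.comp_hasDerivAt y hΦy).sub
    ((hasDerivAt_id y).smul (hu.hasFDerivAt.comp_hasDerivAt y hΦy))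
  rw [hA.hasFDerivAt.hasDerivAt_partial_fst.unique hAt,
    hB.hasFDerivAt.hasDerivAt_partial_snd.unique hBy]
  have h1 : ((1 : ℝ), y) = (1, 0) + y • (0, 1) := by simp
  have h2 : ((0 : ℝ), t) = t • (0, 1) := by simp
  rw [h1, h2]
  simp only [map_add, map_smul, id_eq, Function.comp_apply]
  module

theorem integral2_fderivWithin_divergence [CompleteSpace E] {f g : ℝ × ℝ → E} {a b c d : ℝ}
    (hab : a < b) (hcd : c < d) (hf : ContDiffOn ℝ 1 f (Icc a b ×ˢ Icc c d))
    (hg : ContDiffOn ℝ 1 g (Icc a b ×ˢ Icc c d)) :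
    (∫ t in a..b, ∫ y in c..d,
        fderivWithin ℝ f (Icc a b ×ˢ Icc c d) (t, y) (1, 0) +
          fderivWithin ℝ g (Icc a b ×ˢ Icc c d) (t, y) (0, 1)) =
      (((∫ t in a..b, g (t, d)) - ∫ t in a..b, g (t, c)) + ∫ y in c..d, f (b, y)) -
        ∫ y in c..d, f (a, y) := by
  have hR : UniqueDiffOn ℝ (Icc a b ×ˢ Icc c d) :=
    (uniqueDiffOn_Icc hab).prod (uniqueDiffOn_Icc hcd)
  have huIcc : uIcc a b ×ˢ uIcc c d = Icc a b ×ˢ Icc c d := by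
    rw [uIcc_of_le hab.le, uIcc_of_le hcd.le]
  have hderiv : ∀ {h : ℝ × ℝ → E}, ContDiffOn ℝ 1 h (Icc a b ×ˢ Icc c d) →
      ∀ x ∈ Ioo (min a b) (max a b) ×ˢ Ioo (min c d) (max c d),
        HasFDerivAt h (fderivWithin ℝ h (Icc a b ×ˢ Icc c d) x) x := by
    intro h hh x hx
    rw [min_eq_left hab.le, max_eq_right hab.le, min_eq_left hcd.le, max_eq_right hcd.le] at hx
    exact (hh.differentiableOn one_ne_zero x (prod_mono Ioo_subset_Icc_self
      Ioo_subset_Icc_self hx)).hasFDerivWithinAt.hasFDerivAt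
        (prod_mem_nhds (Icc_mem_nhds hx.1.1 hx.1.2) (Icc_mem_nhds hx.2.1 hx.2.2))
  refine integral2_divergence_prod_of_hasFDerivAt f g _ _ a c b d
    (huIcc ▸ hf.continuousOn) (huIcc ▸ hg.continuousOn) (hderiv hf) (hderiv hg) ?_
  rw [huIcc]
  exact (((hf.continuousOn_fderivWithin hR le_rfl).clm_apply continuousOn_const).add
    ((hg.continuousOn_fderivWithin hR le_rfl).clm_apply continuousOn_const)).integrableOn_compact
      (isCompact_Icc.prod isCompact_Icc)

theorem intervalIntegrable_integral_of_continuousOn {h : ℝ → ℝ → E} {a b c d : ℝ}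
    (hab : a ≤ b) (hcd : c ≤ d) (hh : ContinuousOn (uncurry h) (Icc a b ×ˢ Icc c d)) :
    IntervalIntegrable (fun t => ∫ y in c..d, h t y) volume a b := by
  have hint : Integrable (uncurry h)
      ((volume.restrict (Ioc a b)).prod (volume.restrict (Ioc c d))) := by
    rw [Measure.prod_restrict, ← Measure.volume_eq_prod]
    exact (hh.integrableOn_compact (isCompact_Icc.prod isCompact_Icc)).mono_set
      (prod_mono Ioc_subset_Icc_self Ioc_subset_Icc_self)
  rw [intervalIntegrable_iff_integrableOn_Ioc_of_le hab, IntegrableOn]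
  simpa only [integral_of_le hcd, uncurry_apply_pair] using hint.integral_prod_left

theorem integral2_sub_of_continuousOn {h₁ h₂ : ℝ → ℝ → E} {a b c d : ℝ} (hab : a ≤ b)
    (hcd : c ≤ d) (h₁c : ContinuousOn (uncurry h₁) (Icc a b ×ˢ Icc c d))
    (h₂c : ContinuousOn (uncurry h₂) (Icc a b ×ˢ Icc c d)) :
    (∫ t in a..b, ∫ y in c..d, h₁ t y - h₂ t y) =
      (∫ t in a..b, ∫ y in c..d, h₁ t y) - ∫ t in a..b, ∫ y in c..d, h₂ t y := by
  have hslice : ∀ {h : ℝ → ℝ → E}, ContinuousOn (uncurry h) (Icc a b ×ˢ Icc c d) →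
      ∀ t ∈ uIcc a b, IntervalIntegrable (h t) volume c d := fun hh t ht =>
    (hh.comp (continuous_const.prodMk continuous_id).continuousOn
      fun y hy => ⟨uIcc_of_le hab ▸ ht, hy⟩).intervalIntegrable_of_Icc hcd
  rw [← integral_sub (intervalIntegrable_integral_of_continuousOn hab hcd h₁c)
    (intervalIntegrable_integral_of_continuousOn hab hcd h₂c)]
  exact integral_congr fun t ht => integral_sub (hslice h₁c t ht) (hslice h₂c t ht)

theorem norm_integral2_le_of_norm_le_mul_fst {h : ℝ → ℝ → E} {s c d C : ℝ} (hs : 0 ≤ s)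
    (hcd : c ≤ d) (hh : ∀ t ∈ Ioo 0 s, ∀ y ∈ Ioo c d, ‖h t y‖ ≤ C * t) :
    ‖∫ t in (0 : ℝ)..s, ∫ y in c..d, h t y‖ ≤ C * ((d - c) * s ^ 2 / 2) := by
  have hinner : ∀ t ∈ Ioo 0 s, ‖∫ y in c..d, h t y‖ ≤ C * (d - c) * t := fun t ht => by
    have hae : ∀ᵐ y, y ∈ uIoc c d → ‖h t y‖ ≤ C * t := by
      filter_upwards [Measure.ae_ne volume d] with y hyd hy
      rw [uIoc_of_le hcd] at hy
      exact hh t ht y ⟨hy.1, lt_of_le_of_ne hy.2 hyd⟩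
    calc ‖∫ y in c..d, h t y‖ ≤ C * t * |d - c| := norm_integral_le_of_norm_le_const_ae hae
      _ = C * (d - c) * t := by rw [abs_of_nonneg (sub_nonneg.2 hcd)]; ring
  have hae : ∀ᵐ t, t ∈ Ioc 0 s → ‖∫ y in c..d, h t y‖ ≤ C * (d - c) * t := by
    filter_upwards [Measure.ae_ne volume s] with t hts ht
    exact hinner t ⟨ht.1, lt_of_le_of_ne ht.2 hts⟩
  calc ‖∫ t in (0 : ℝ)..s, ∫ y in c..d, h t y‖ ≤ ∫ t in (0 : ℝ)..s, C * (d - c) * t :=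
        intervalIntegral.norm_integral_le_of_norm_le hs hae
          ((continuous_const_mul _).intervalIntegrable 0 s)
    _ = C * ((d - c) * s ^ 2 / 2) := by
      rw [intervalIntegral.integral_const_mul, integral_id]; ring

def fanTriangle (s σm σp : ℝ) : Set (ℝ × ℝ) :=
  {z | 0 ≤ z.1 ∧ z.1 ≤ s ∧ σm * z.1 ≤ z.2 ∧ z.2 ≤ σp * z.1}

theorem mapsTo_fanMap_fanTriangle {s σm σp : ℝ} :
    MapsTo fanMap (Icc 0 s ×ˢ Icc σm σp) (fanTriangle s σm σp) := by
  rintro ⟨t, y⟩ ⟨⟨ht0, hts⟩, hym, hyp⟩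
  exact ⟨ht0, hts, by simp only [fanMap]; nlinarith, by simp only [fanMap]; nlinarith⟩

theorem fanMap_mem_interior_fanTriangle {s σm σp : ℝ} {q : ℝ × ℝ}
    (hq : q ∈ Ioo 0 s ×ˢ Ioo σm σp) : fanMap q ∈ interior (fanTriangle s σm σp) := by
  obtain ⟨⟨ht0, hts⟩, hym, hyp⟩ := hq
  rw [mem_interior_iff_mem_nhds]
  have h0 : ∀ᶠ z : ℝ × ℝ in 𝓝 (fanMap q), 0 < z.1 :=
    continuousAt_const.eventually_lt continuousAt_fst ht0
  have hs : ∀ᶠ z : ℝ × ℝ in 𝓝 (fanMap q), z.1 < s :=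
    continuousAt_fst.eventually_lt continuousAt_const hts
  have hm : ∀ᶠ z : ℝ × ℝ in 𝓝 (fanMap q), σm * z.1 < z.2 :=
    (continuousAt_const.mul continuousAt_fst).eventually_lt continuousAt_snd
      (by dsimp [fanMap]; nlinarith)
  have hp : ∀ᶠ z : ℝ × ℝ in 𝓝 (fanMap q), z.2 < σp * z.1 :=
    continuousAt_snd.eventually_lt (continuousAt_const.mul continuousAt_fst)
      (by dsimp [fanMap]; nlinarith)
  filter_upwards [h0, hs, hm, hp] with z h0 hs hm hp
  exact ⟨h0.le, hs.le, hm.le, hp.le⟩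

theorem integral_fanFluxTime_slice (S : ℝ × ℝ → E) (t σm σp : ℝ) :
    (∫ y in σm..σp, fanFluxTime S (t, y)) = ∫ x in (σm * t)..(σp * t), S (t, x) := by
  rw [mul_comm σm, mul_comm σp, ← smul_integral_comp_mul_left, ← intervalIntegral.integral_smul]
  rfl

theorem norm_integral_fanTriangle_sub_boundary_le [CompleteSpace E] {u w S : ℝ × ℝ → E}
    {s σm σp M : ℝ} (hs : 0 < s) (hσ : σm < σp)
    (hu : ContDiffOn ℝ 1 u (fanTriangle s σm σp)) (hw : ContDiffOn ℝ 1 w (fanTriangle s σm σp))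
    (hS : ContinuousOn S (fanTriangle s σm σp))
    (hres : ∀ z ∈ interior (fanTriangle s σm σp),
      ‖fderiv ℝ u z (1, 0) + fderiv ℝ w z (0, 1) - S z‖ ≤ M) :
    ‖(∫ t in (0 : ℝ)..s, ∫ x in (σm * t)..(σp * t), S (t, x))
        - ((∫ x in (σm * s)..(σp * s), u (s, x))
          + (∫ t in (0 : ℝ)..s, w (t, σp * t) - σp • u (t, σp * t))
          - (∫ t in (0 : ℝ)..s, w (t, σm * t) - σm • u (t, σm * t)))‖ ≤
      M * ((σp - σm) * s ^ 2 / 2) := by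
  set R := Icc 0 s ×ˢ Icc σm σp
  have hA : ContDiffOn ℝ 1 (fanFluxTime u) R := hu.fanFluxTime mapsTo_fanMap_fanTriangle
  have hB : ContDiffOn ℝ 1 (fanFluxSpace u w) R := hu.fanFluxSpace hw mapsTo_fanMap_fanTriangle
  have hRu : UniqueDiffOn ℝ R := (uniqueDiffOn_Icc hs).prod (uniqueDiffOn_Icc hσ)
  have hsource : (∫ t in (0 : ℝ)..s, ∫ x in (σm * t)..(σp * t), S (t, x)) =
      ∫ t in (0 : ℝ)..s, ∫ y in σm..σp, fanFluxTime S (t, y) := by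
    simp only [integral_fanFluxTime_slice]
  have hside : ∀ σ, (∫ t in (0 : ℝ)..s, w (t, σ * t) - σ • u (t, σ * t)) =
      ∫ t in (0 : ℝ)..s, fanFluxSpace u w (t, σ) := fun σ =>
    integral_congr fun t _ => by simp only [fanFluxSpace, fanMap, mul_comm t]
  have hgreen : (∫ t in (0 : ℝ)..s, ∫ y in σm..σp,
      fderivWithin ℝ (fanFluxTime u) R (t, y) (1, 0) +
        fderivWithin ℝ (fanFluxSpace u w) R (t, y) (0, 1)) =
      (∫ y in σm..σp, fanFluxTime u (s, y)) + (∫ t in (0 : ℝ)..s, fanFluxSpace u w (t, σp)) -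
        ∫ t in (0 : ℝ)..s, fanFluxSpace u w (t, σm) := by
    rw [integral2_fderivWithin_divergence hs hσ hA hB]
    simp only [fanFluxTime, zero_smul, intervalIntegral.integral_zero, sub_zero]
    abel
  rw [hsource, ← integral_fanFluxTime_slice, hside, hside, ← hgreen,
    ← integral2_sub_of_continuousOn hs.le hσ.le ?_ ?_]
  · refine norm_integral2_le_of_norm_le_mul_fst hs.le hσ.le fun t ht y hy => ?_
    have hz := fanMap_mem_interior_fanTriangle (show (t, y) ∈ Ioo 0 s ×ˢ Ioo σm σp from ⟨ht, hy⟩)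
    have hdiff : ∀ {f : ℝ × ℝ → E}, ContDiffOn ℝ 1 f (fanTriangle s σm σp) →
        DifferentiableAt ℝ f (fanMap (t, y)) := fun hf =>
      (hf.contDiffAt (mem_interior_iff_mem_nhds.1 hz)).differentiableAt one_ne_zero
    have hR : R ∈ 𝓝 (t, y) := prod_mem_nhds (Icc_mem_nhds ht.1 ht.2) (Icc_mem_nhds hy.1 hy.2)
    rw [fderivWithin_of_mem_nhds hR, fderivWithin_of_mem_nhds hR,
      fderiv_fanFluxTime_add_fanFluxSpace (hdiff hu) (hdiff hw), fanFluxTime, ← smul_sub,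
      norm_smul, norm_sub_rev, Real.norm_of_nonneg ht.1.le, mul_comm M]
    exact mul_le_mul_of_nonneg_left (hres _ hz) ht.1.le
  · exact hS.fanFluxTime mapsTo_fanMap_fanTriangle
  · exact ((hA.continuousOn_fderivWithin hRu le_rfl).clm_apply continuousOn_const).add
      ((hB.continuousOn_fderivWithin hRu le_rfl).clm_apply continuousOn_const)

end

theorem stmt11_general {p : ℕ}
    (θ : ℝ × ℝ → ℝ) (hθ : ContDiff ℝ 1 θ)
    (Θ : ℝ) (hΘ : ∀ z, |θ z| ≤ Θ)
    (f g : ℝ → ℝ → (Fin p → ℝ) → (Fin p → ℝ))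
    (hfC1 : ContDiff ℝ 1 (fun z : ℝ × ℝ × (Fin p → ℝ) => f z.1 z.2.1 z.2.2))
    (hgC1 : ContDiff ℝ 1 (fun z : ℝ × ℝ × (Fin p → ℝ) => g z.1 z.2.1 z.2.2))
    (s σm σp E : ℝ) (hs : 0 < s) (hσ : σm < σp)
    (T : Set (ℝ × ℝ))
    (hT : T = {z : ℝ × ℝ | 0 ≤ z.1 ∧ z.1 ≤ s ∧ σm * z.1 ≤ z.2 ∧ z.2 ≤ σp * z.1})
    (v : ℝ → ℝ → (Fin p → ℝ))
    (hv : ContDiffOn ℝ 1 (fun z : ℝ × ℝ => v z.1 z.2) T)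
    (F G : ℝ → ℝ → (Fin p → ℝ))
    (hF : ∀ t x, F t x = f t x (v t x))
    (hG : ∀ t x, G t x = g t x (v t x))
    (hres : ∀ z ∈ T,
      ‖deriv (fun t' => v t' z.2) z.1 + deriv (fun x' => F z.1 x') z.2
          - G z.1 z.2‖ ≤ E) :
    ‖(∫ t in (0:ℝ)..s, ∫ x in (σm * t)..(σp * t),
          (deriv (fun t' => θ (t', x)) t) • v t x
            + (deriv (fun x' => θ (t, x')) x) • F t x
            + θ (t, x) • G t x)
        - ((∫ x in (σm * s)..(σp * s), θ (s, x) • v s x)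
            + (∫ t in (0:ℝ)..s,
                θ (t, σp * t) • (F t (σp * t) - σp • v t (σp * t)))
            - (∫ t in (0:ℝ)..s,
                θ (t, σm * t) • (F t (σm * t) - σm • v t (σm * t))))‖ ≤
      E * Θ * ((σp - σm) * s ^ 2 / 2) := by
  subst hT
  set V : ℝ × ℝ → (Fin p → ℝ) := fun z => v z.1 z.2
  set W : ℝ × ℝ → (Fin p → ℝ) := fun z => F z.1 z.2
  have hθd : Differentiable ℝ θ := hθ.differentiable one_ne_zero
  have hW : ContDiffOn ℝ 1 W (fanTriangle s σm σp) :=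
    (hfC1.comp_contDiffOn_graph hv).congr fun z _ => hF z.1 z.2
  have hG' : ContinuousOn (fun z : ℝ × ℝ => G z.1 z.2) (fanTriangle s σm σp) :=
    (hgC1.comp_contDiffOn_graph hv).continuousOn.congr fun z _ => hG z.1 z.2
  have hθt : ∀ t x, deriv (fun t' => θ (t', x)) t = fderiv ℝ θ (t, x) (1, 0) := fun t x =>
    (hθd (t, x)).hasFDerivAt.hasDerivAt_partial_fst.deriv
  have hθx : ∀ t x, deriv (fun x' => θ (t, x')) x = fderiv ℝ θ (t, x) (0, 1) := fun t x =>
    (hθd (t, x)).hasFDerivAt.hasDerivAt_partial_snd.deriv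
  have hflux : ∀ σ t, θ (t, σ * t) • (F t (σ * t) - σ • v t (σ * t)) =
      θ (t, σ * t) • F t (σ * t) - σ • θ (t, σ * t) • v t (σ * t) := fun σ t => by
    rw [smul_sub, smul_comm]
  simp only [hθt, hθx, hflux]
  refine norm_integral_fanTriangle_sub_boundary_le (u := θ • V) (w := θ • W)
    (S := fun z => fderiv ℝ θ z (1, 0) • V z + fderiv ℝ θ z (0, 1) • W z + θ z • G z.1 z.2)
    hs hσ (hθ.contDiffOn.smul hv) (hθ.contDiffOn.smul hW) ?_ fun z hz => ?_
  · have hdθ := hθ.continuous_fderiv one_ne_zero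
    exact (((hdθ.clm_apply continuous_const).continuousOn.smul hv.continuousOn).add
      ((hdθ.clm_apply continuous_const).continuousOn.smul hW.continuousOn)).add
        (hθ.continuous.continuousOn.smul hG')
  · have hzT := mem_interior_iff_mem_nhds.1 hz
    have hVz := (hv.contDiffAt hzT).differentiableAt one_ne_zero
    have hWz := (hW.contDiffAt hzT).differentiableAt one_ne_zero
    have hresz := hres z (interior_subset hz)
    rw [hVz.hasFDerivAt.hasDerivAt_partial_fst.deriv,
      hWz.hasFDerivAt.hasDerivAt_partial_snd.deriv] at hresz
    rw [fderiv_smul_divergence_sub _ (hθd z) hVz hWz, norm_smul, Real.norm_eq_abs, mul_comm E]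
    exact mul_le_mul (hΘ z) hresz (norm_nonneg _) ((abs_nonneg _).trans (hΘ z))

/-- Green's formula on the triangle swept by a rarefaction fan: the weak-form
integral differs from the boundary terms `B(θ)` by at most
`E·‖θ‖_{C⁰}·|T|` where `|T| = (σ⁺ - σ⁻)s²/2`. -/
theorem stmt11 {p : ℕ}
    (θ : ℝ × ℝ → ℝ) (hθ : ContDiff ℝ 1 θ) (hθc : HasCompactSupport θ)
    (Θ : ℝ) (hΘ : ∀ z, |θ z| ≤ Θ)
    (f g : ℝ → ℝ → (Fin p → ℝ) → (Fin p → ℝ))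
    (hfC1 : ContDiff ℝ 1 (fun z : ℝ × ℝ × (Fin p → ℝ) => f z.1 z.2.1 z.2.2))
    (hgC1 : ContDiff ℝ 1 (fun z : ℝ × ℝ × (Fin p → ℝ) => g z.1 z.2.1 z.2.2))
    (s σm σp E : ℝ) (hs : 0 < s) (hσ : σm < σp) (hE : 0 ≤ E)
    (T : Set (ℝ × ℝ))
    (hT : T = {z : ℝ × ℝ | 0 ≤ z.1 ∧ z.1 ≤ s ∧ σm * z.1 ≤ z.2 ∧ z.2 ≤ σp * z.1})
    (v : ℝ → ℝ → (Fin p → ℝ))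
    (hv : ContDiffOn ℝ 1 (fun z : ℝ × ℝ => v z.1 z.2) T)
    (F G : ℝ → ℝ → (Fin p → ℝ))
    (hF : ∀ t x, F t x = f t x (v t x))
    (hG : ∀ t x, G t x = g t x (v t x))
    (hres : ∀ z ∈ T,
      ‖deriv (fun t' => v t' z.2) z.1 + deriv (fun x' => F z.1 x') z.2
          - G z.1 z.2‖ ≤ E) :
    ‖(∫ t in (0:ℝ)..s, ∫ x in (σm * t)..(σp * t),
          (deriv (fun t' => θ (t', x)) t) • v t x
            + (deriv (fun x' => θ (t, x')) x) • F t x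
            + θ (t, x) • G t x)
        - ((∫ x in (σm * s)..(σp * s), θ (s, x) • v s x)
            + (∫ t in (0:ℝ)..s,
                θ (t, σp * t) • (F t (σp * t) - σp • v t (σp * t)))
            - (∫ t in (0:ℝ)..s,
                θ (t, σm * t) • (F t (σm * t) - σm • v t (σm * t))))‖ ≤
      E * Θ * ((σp - σm) * s ^ 2 / 2) :=
  stmt11_general θ hθ Θ hΘ f g hfC1 hgC1 s σm σp E hs hσ T hT v hv F G hF hG hres
end
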